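/- Let Q = (q_1,…,q_n) and C = (c_1,…,c_n) be sequences in ℝ^D, let W ≥ 0 be an integer, and for each j let T_j ⊆ ℝ^D be a finite nonempty set containing { q_i : 1 ≤ i ≤ n, |i − j| ≤ W }. Then Σ_{j=1}^n bd(c_j, T_j)² ≤ DTW²_W(Q,C), and moreover if additionally T_j ⊆ T'_j for finite sets T'_j, then Σ_{j=1}^n bd(c_j, T'_j)² ≤ Σ_{j=1}^n bd(c_j, T_j)². -/

import Mathlib

/-!
Since the column index of a warping path moves by at most one per step, every column `j` is
visited at some step `k`, and the query point `q_i` matched there lies in the window of `j`,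
hence in `T j`. The bounding box of `T j` contains `q_i`, so `bd(c_j, T j) ≤ ‖q_i - c_j‖`;
summing over the distinct steps chosen for distinct columns bounds the left side by the path
cost. Enlarging a set enlarges its bounding box, which can only bring it closer to `c_j`.
-/

/-- A window-`W` warping path for two series of length `n`. -/
def IsWarpPath (n W K : ℕ) (p : ℕ → ℕ × ℕ) : Prop :=
  1 ≤ K ∧ p 1 = (1, 1) ∧ p K = (n, n) ∧
  (∀ k, 1 ≤ k → k < K →
    p (k + 1) = ((p k).1 + 1, (p k).2) ∨
    p (k + 1) = ((p k).1, (p k).2 + 1) ∨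
    p (k + 1) = ((p k).1 + 1, (p k).2 + 1)) ∧
  (∀ k, 1 ≤ k → k ≤ K → |((p k).1 : ℤ) - ((p k).2 : ℤ)| ≤ (W : ℤ))

/-- The box distance `bd(c, S)`: the Euclidean distance from the point `c` to the
axis-aligned bounding box of the set `S ⊆ ℝ^D`. -/
noncomputable def boxDist {D : ℕ} (c : EuclideanSpace ℝ (Fin D))
    (S : Set (EuclideanSpace ℝ (Fin D))) : ℝ :=
  Real.sqrt (∑ p : Fin D,
    max (c p - sSup ((fun s => s p) '' S)) (max (sInf ((fun s => s p) '' S) - c p) 0) ^ 2)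

open Finset

theorem Finset.sum_le_sum_of_forall_exists_preimage {ι κ M : Type*} [AddCommMonoid M]
    [PartialOrder M] [IsOrderedAddMonoid M] {s : Finset ι} {t : Finset κ} {f : ι → M}
    {g : κ → M} (e : κ → ι) (hg : ∀ k ∈ t, 0 ≤ g k)
    (h : ∀ i ∈ s, ∃ k ∈ t, e k = i ∧ f i ≤ g k) :
    ∑ i ∈ s, f i ≤ ∑ k ∈ t, g k := by
  classical
  calc ∑ i ∈ s, f i ≤ ∑ i ∈ s, ∑ k ∈ t with e k = i, g k := by
        refine sum_le_sum fun i hi => ?_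
        obtain ⟨k, hk, hek, hfg⟩ := h i hi
        exact hfg.trans (single_le_sum (fun k hk => hg k (mem_filter.1 hk).1)
          (mem_filter.2 ⟨hk, hek⟩))
    _ ≤ ∑ k ∈ t, g k :=
        sum_fiberwise_le_sum_of_sum_fiber_nonneg fun i _ =>
          sum_nonneg fun k hk => hg k (mem_filter.1 hk).1

theorem Nat.exists_eq_of_le_add_one {f : ℕ → ℕ} {a b : ℕ} (hab : a ≤ b)
    (hf : ∀ k, a ≤ k → k < b → f (k + 1) ≤ f k + 1) {j : ℕ} (hj₁ : f a ≤ j) (hj₂ : j ≤ f b) :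
    ∃ k ∈ Icc a b, f k = j := by
  induction b, hab using Nat.le_induction with
  | base => exact ⟨a, left_mem_Icc.2 le_rfl, by omega⟩
  | succ b hab ih =>
    by_cases hjb : j ≤ f b
    · obtain ⟨k, hk, hkj⟩ := ih (fun k hak hkb => hf k hak (by omega)) hjb
      exact ⟨k, Icc_subset_Icc_right (by omega) hk, hkj⟩
    · have hstep := hf b hab (by omega)
      exact ⟨b + 1, right_mem_Icc.2 (by omega), by omega⟩

namespace IsWarpPath

variable {n W K : ℕ} {π : ℕ → ℕ × ℕ}

theorem fst_le_fst_succ (hπ : IsWarpPath n W K π) {k : ℕ} (hk : 1 ≤ k) (hkK : k < K) :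
    (π k).1 ≤ (π (k + 1)).1 := by
  rcases hπ.2.2.2.1 k hk hkK with h | h | h <;> simp [h]

theorem snd_succ_le_snd_add_one (hπ : IsWarpPath n W K π) {k : ℕ} (hk : 1 ≤ k)
    (hkK : k < K) : (π (k + 1)).2 ≤ (π k).2 + 1 := by
  rcases hπ.2.2.2.1 k hk hkK with h | h | h <;> simp [h]

theorem fst_le_fst (hπ : IsWarpPath n W K π) {a b : ℕ} (ha : 1 ≤ a) (hab : a ≤ b)
    (hb : b ≤ K) : (π a).1 ≤ (π b).1 := by
  induction b, hab using Nat.le_induction with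
  | base => exact le_rfl
  | succ b hab ih => exact (ih (by omega)).trans (hπ.fst_le_fst_succ (by omega) (by omega))

theorem fst_mem_Icc (hπ : IsWarpPath n W K π) {k : ℕ} (hk : k ∈ Icc 1 K) :
    (π k).1 ∈ Icc 1 n := by
  obtain ⟨hk₁, hk₂⟩ := mem_Icc.1 hk
  have h₁ := hπ.fst_le_fst le_rfl hk₁ hk₂
  have h₂ := hπ.fst_le_fst hk₁ hk₂ le_rfl
  rw [hπ.2.1] at h₁
  rw [hπ.2.2.1] at h₂
  exact mem_Icc.2 ⟨h₁, h₂⟩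

theorem exists_snd_eq (hπ : IsWarpPath n W K π) {j : ℕ} (hj : j ∈ Icc 1 n) :
    ∃ k ∈ Icc 1 K, (π k).2 = j := by
  obtain ⟨hj₁, hj₂⟩ := mem_Icc.1 hj
  refine Nat.exists_eq_of_le_add_one hπ.1 (fun k hk hkK => hπ.snd_succ_le_snd_add_one hk hkK)
    ?_ ?_
  · rwa [hπ.2.1]
  · rwa [hπ.2.2.1]

theorem abs_fst_sub_snd_le (hπ : IsWarpPath n W K π) {k : ℕ} (hk : k ∈ Icc 1 K) :
    |((π k).1 : ℤ) - (π k).2| ≤ W :=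
  hπ.2.2.2.2 k (mem_Icc.1 hk).1 (mem_Icc.1 hk).2

end IsWarpPath

/-- The distance from `a` to the interval `[sInf s, sSup s]`. -/
noncomputable def intervalGap (a : ℝ) (s : Set ℝ) : ℝ :=
  max (a - sSup s) (max (sInf s - a) 0)

section intervalGap

variable {a : ℝ} {s t : Set ℝ}

theorem intervalGap_nonneg : 0 ≤ intervalGap a s :=
  le_max_of_le_right (le_max_right _ _)

theorem intervalGap_le_abs_sub {x : ℝ} (hx : x ∈ s) (hs₁ : BddAbove s) (hs₂ : BddBelow s) :
    intervalGap a s ≤ |x - a| := by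
  have h₁ := le_csSup hs₁ hx
  have h₂ := csInf_le hs₂ hx
  refine max_le ?_ (max_le ?_ (abs_nonneg _))
  · linarith [neg_abs_le (x - a)]
  · linarith [le_abs_self (x - a)]

theorem intervalGap_anti (hs : s.Nonempty) (ht₁ : BddAbove t) (ht₂ : BddBelow t)
    (hst : s ⊆ t) : intervalGap a t ≤ intervalGap a s := by
  have h₁ := csSup_le_csSup ht₁ hs hst
  have h₂ := csInf_le_csInf ht₂ hs hst
  unfold intervalGap
  refine max_le (le_max_of_le_left ?_) (max_le (le_max_of_le_right (le_max_of_le_left ?_))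
    (le_max_of_le_right (le_max_right _ _))) <;> linarith

end intervalGap

section boxDist

variable {D : ℕ} {c : EuclideanSpace ℝ (Fin D)} {S S' : Set (EuclideanSpace ℝ (Fin D))}

theorem boxDist_eq_sqrt_sum_intervalGap :
    boxDist c S = √(∑ p, intervalGap (c p) ((fun s => s p) '' S) ^ 2) :=
  rfl

theorem boxDist_nonneg : 0 ≤ boxDist c S :=
  Real.sqrt_nonneg _

theorem boxDist_le_norm_sub {x : EuclideanSpace ℝ (Fin D)} (hS : S.Finite) (hx : x ∈ S) :
    boxDist c S ≤ ‖x - c‖ := by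
  rw [boxDist_eq_sqrt_sum_intervalGap, EuclideanSpace.norm_eq]
  gcongr with p
  · exact intervalGap_nonneg
  · simpa using intervalGap_le_abs_sub (Set.mem_image_of_mem _ hx) (hS.image _).bddAbove
      (hS.image _).bddBelow

theorem boxDist_anti (hS : S.Nonempty) (hS' : S'.Finite) (h : S ⊆ S') :
    boxDist c S' ≤ boxDist c S := by
  rw [boxDist_eq_sqrt_sum_intervalGap, boxDist_eq_sqrt_sum_intervalGap]
  gcongr with p
  · exact intervalGap_nonneg
  · exact intervalGap_anti (hS.image _) (hS'.image _).bddAbove (hS'.image _).bddBelow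
      (Set.image_mono h)

end boxDist

theorem grouped_boxes_le_dtw_general {D : ℕ} (n W : ℕ)
    (q c : ℕ → EuclideanSpace ℝ (Fin D))
    (T : ℕ → Set (EuclideanSpace ℝ (Fin D)))
    (hfin : ∀ j, 1 ≤ j → j ≤ n → (T j).Finite)
    (hcontains : ∀ j, 1 ≤ j → j ≤ n →
      {x | ∃ i, 1 ≤ i ∧ i ≤ n ∧ |(i : ℤ) - (j : ℤ)| ≤ (W : ℤ) ∧ x = q i} ⊆ T j)
    (K : ℕ) (π : ℕ → ℕ × ℕ) (hπ : IsWarpPath n W K π)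
    (T' : ℕ → Set (EuclideanSpace ℝ (Fin D)))
    (hfin' : ∀ j, 1 ≤ j → j ≤ n → (T' j).Finite)
    (hsub : ∀ j, 1 ≤ j → j ≤ n → T j ⊆ T' j) :
    (∑ j ∈ Finset.Icc 1 n, boxDist (c j) (T j) ^ 2 ≤
        ∑ k ∈ Finset.Icc 1 K, ‖q (π k).1 - c (π k).2‖ ^ 2) ∧
    ∑ j ∈ Finset.Icc 1 n, boxDist (c j) (T' j) ^ 2 ≤
      ∑ j ∈ Finset.Icc 1 n, boxDist (c j) (T j) ^ 2 := by
  constructor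
  · refine sum_le_sum_of_forall_exists_preimage (fun k => (π k).2) (fun _ _ => sq_nonneg _) ?_
    intro j hj
    obtain ⟨hj₁, hj₂⟩ := mem_Icc.1 hj
    obtain ⟨k, hk, rfl⟩ := hπ.exists_snd_eq hj
    obtain ⟨hi₁, hi₂⟩ := mem_Icc.1 (hπ.fst_mem_Icc hk)
    have hmem : q (π k).1 ∈ T (π k).2 :=
      hcontains _ hj₁ hj₂ ⟨_, hi₁, hi₂, hπ.abs_fst_sub_snd_le hk, rfl⟩
    refine ⟨k, hk, rfl, ?_⟩
    exact pow_le_pow_left₀ boxDist_nonneg (boxDist_le_norm_sub (hfin _ hj₁ hj₂) hmem) 2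
  · refine sum_le_sum fun j hj => ?_
    obtain ⟨hj₁, hj₂⟩ := mem_Icc.1 hj
    have hne : (T j).Nonempty := ⟨q j, hcontains j hj₁ hj₂ ⟨j, hj₁, hj₂, by simp, rfl⟩⟩
    exact pow_le_pow_left₀ boxDist_nonneg (boxDist_anti hne (hfin' j hj₁ hj₂) (hsub j hj₁ hj₂)) 2

/-- Soundness of uniform window grouping: if each finite nonempty set `T j` contains all
query points in the window of candidate point `c j`, then `∑_j bd(c_j, T_j)²` is at most
the squared cost of every window-`W` warping path (hence at most `DTW²_W(Q,C)`); and
enlarging each `T j` to a finite superset `T' j` can only decrease the bound. -/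
theorem grouped_boxes_le_dtw {D : ℕ} (n W : ℕ) (hn : 1 ≤ n)
    (q c : ℕ → EuclideanSpace ℝ (Fin D))
    (T : ℕ → Set (EuclideanSpace ℝ (Fin D)))
    (hfin : ∀ j, 1 ≤ j → j ≤ n → (T j).Finite)
    (hne : ∀ j, 1 ≤ j → j ≤ n → (T j).Nonempty)
    (hcontains : ∀ j, 1 ≤ j → j ≤ n →
      {x | ∃ i, 1 ≤ i ∧ i ≤ n ∧ |(i : ℤ) - (j : ℤ)| ≤ (W : ℤ) ∧ x = q i} ⊆ T j)
    (K : ℕ) (π : ℕ → ℕ × ℕ) (hπ : IsWarpPath n W K π)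
    (T' : ℕ → Set (EuclideanSpace ℝ (Fin D)))
    (hfin' : ∀ j, 1 ≤ j → j ≤ n → (T' j).Finite)
    (hsub : ∀ j, 1 ≤ j → j ≤ n → T j ⊆ T' j) :
    (∑ j ∈ Finset.Icc 1 n, boxDist (c j) (T j) ^ 2 ≤
        ∑ k ∈ Finset.Icc 1 K, ‖q (π k).1 - c (π k).2‖ ^ 2) ∧
    ∑ j ∈ Finset.Icc 1 n, boxDist (c j) (T' j) ^ 2 ≤
      ∑ j ∈ Finset.Icc 1 n, boxDist (c j) (T j) ^ 2 :=
  grouped_boxes_le_dtw_general n W q c T hfin hcontains K π hπ T' hfin' hsub
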